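/- Under the hypotheses of the distributed-place reduction theorem (safe N, covering by distributed places P_p each initially empty or full, P' preserving adjacency, enables, and disables of each P'_p = P_p ∩ P'), the reduced net N' is safe. -/

import Mathlib

open Set

structure Net (P T : Type) where
  pre : T → Set P
  post : T → Set P
  minit : Set P

variable {P T : Type}

def fireable (N : Net P T) (t : T) (M : Set P) : Prop := N.pre t ⊆ M

def fire (N : Net P T) (t : T) (M : Set P) : Set P := (M \ N.pre t) ∪ N.post t

def valid (N : Net P T) : Set P → List T → Prop
  | _, [] => True
  | M, t :: σ => fireable N t M ∧ valid N (fire N t M) σ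

def runFrom (N : Net P T) (M : Set P) (σ : List T) : Set P :=
  σ.foldl (fun M t => fire N t M) M

def isFiringSeq (N : Net P T) (σ : List T) : Prop := valid N N.minit σ

def reachable (N : Net P T) (M : Set P) : Prop :=
  ∃ σ, isFiringSeq N σ ∧ runFrom N N.minit σ = M

def safe (N : Net P T) : Prop :=
  ∀ M, reachable N M → ∀ t, fireable N t M → (N.post t \ N.pre t) ∩ M = ∅

/-- transitions inserting tokens into some place of `Q` (the set `•Q`). -/
def preQ (N : Net P T) (Q : Set P) : Set T := {t | (N.post t ∩ Q).Nonempty}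

/-- transitions removing tokens from some place of `Q` (the set `Q•`). -/
def postQ (N : Net P T) (Q : Set P) : Set T := {t | (N.pre t ∩ Q).Nonempty}

def adjQ (N : Net P T) (Q : Set P) : Set T := preQ N Q ∪ postQ N Q

def insQ (N : Net P T) (Q : Set P) : Set T := preQ N Q \ postQ N Q

def remQ (N : Net P T) (Q : Set P) : Set T := postQ N Q \ preQ N Q

def readQ (N : Net P T) (Q : Set P) : Set T :=
  {t ∈ adjQ N Q | N.pre t ∩ Q = N.post t ∩ Q}

def enablesQ (N : Net P T) (Q : Set P) : Set (T × T) :=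
  {tu | (Q ∩ (N.post tu.1 \ N.pre tu.1) ∩ N.pre tu.2).Nonempty}

def disablesQ (N : Net P T) (Q : Set P) : Set (T × T) :=
  {tu | (Q ∩ (N.pre tu.1 \ N.post tu.1) ∩ N.pre tu.2).Nonempty}

def postList (N : Net P T) (l : List T) : Set P := ⋃ t ∈ l, N.post t

def epreList (N : Net P T) (l : List T) : Set P := ⋃ t ∈ l, (N.pre t \ N.post t)

def isInSeq (N : Net P T) (Q : Set P) (σ : List T) : Prop :=
  σ ≠ [] ∧ (∀ t ∈ σ, t ∈ insQ N Q ∪ readQ N Q) ∧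
  (∀ t ∈ σ.head?, t ∈ insQ N Q) ∧
  ∀ i (h : i < σ.length), 0 < i →
    Q ∩ N.pre (σ.get ⟨i, h⟩) ⊆ postList N (σ.take i) ∧
    Q ∩ (N.post (σ.get ⟨i, h⟩) \ N.pre (σ.get ⟨i, h⟩)) ∩ postList N (σ.take i) = ∅

def isCInSeq (N : Net P T) (Q : Set P) (σ : List T) : Prop :=
  isInSeq N Q σ ∧ Q ⊆ postList N σ

def isOutSeq (N : Net P T) (Q : Set P) (σ : List T) : Prop :=
  σ ≠ [] ∧ (∀ t ∈ σ, t ∈ remQ N Q ∪ readQ N Q) ∧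
  (∀ t ∈ σ.head?, t ∈ remQ N Q) ∧
  ∀ i (h : i < σ.length), 0 < i →
    Q ∩ N.pre (σ.get ⟨i, h⟩) ⊆ Q \ epreList N (σ.take i)

def isCOutSeq (N : Net P T) (Q : Set P) (σ : List T) : Prop :=
  isOutSeq N Q σ ∧ Q ⊆ epreList N σ

def distPlace (N : Net P T) (Q : Set P) : Prop :=
  Q.Nonempty ∧
  adjQ N Q = insQ N Q ∪ remQ N Q ∪ readQ N Q ∧
  (∀ t ∈ insQ N Q, ∀ u ∈ remQ N Q, (t, u) ∈ enablesQ N Q) ∧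
  (∀ σ, isInSeq N Q σ → ∃ τ, σ <+: τ ∧ isCInSeq N Q τ) ∧
  (∀ σ, isOutSeq N Q σ → ∃ τ, σ <+: τ ∧ isCOutSeq N Q τ)

def pureDP (N : Net P T) (Q : Set P) : Prop := postQ N Q ∩ preQ N Q = ∅

def separated (N : Net P T) (Q R : Set P) : Prop := adjQ N Q ∩ adjQ N R = ∅

/-- the net obtained by restricting the places of `N` to `P'` -/
def restrictNet (N : Net P T) (P' : Set P) : Net P T where
  pre t := N.pre t ∩ P'
  post t := N.post t ∩ P'
  minit := N.minit ∩ P'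

section Stmt18Aux

variable {P T : Type}

/-! ### List / postList basics -/

lemma mem_postList {N : Net P T} {l : List T} {x : P} :
    x ∈ postList N l ↔ ∃ t ∈ l, x ∈ N.post t := by
  simp [postList]

lemma mem_epreList {N : Net P T} {l : List T} {x : P} :
    x ∈ epreList N l ↔ ∃ t ∈ l, x ∈ N.pre t \ N.post t := by
  simp only [epreList, Set.mem_iUnion, Set.mem_diff, exists_prop]

lemma postList_nil {N : Net P T} : postList N ([] : List T) = ∅ := by
  ext x; simp [mem_postList]

lemma epreList_nil {N : Net P T} : epreList N ([] : List T) = ∅ := by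
  ext x; simp [mem_epreList]

lemma postList_subset {N : Net P T} {l₁ l₂ : List T} (h : ∀ t ∈ l₁, t ∈ l₂) :
    postList N l₁ ⊆ postList N l₂ := by
  intro x hx
  rw [mem_postList] at *
  obtain ⟨t, ht, hx⟩ := hx
  exact ⟨t, h t ht, hx⟩

lemma epreList_subset {N : Net P T} {l₁ l₂ : List T} (h : ∀ t ∈ l₁, t ∈ l₂) :
    epreList N l₁ ⊆ epreList N l₂ := by
  intro x hx
  rw [mem_epreList] at *
  obtain ⟨t, ht, hx⟩ := hx
  exact ⟨t, h t ht, hx⟩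

lemma postList_append {N : Net P T} (l₁ l₂ : List T) :
    postList N (l₁ ++ l₂) = postList N l₁ ∪ postList N l₂ := by
  ext x
  simp only [Set.mem_union, mem_postList, List.mem_append]
  constructor
  · rintro ⟨t, ht | ht, hx⟩
    · exact Or.inl ⟨t, ht, hx⟩
    · exact Or.inr ⟨t, ht, hx⟩
  · rintro (⟨t, ht, hx⟩ | ⟨t, ht, hx⟩)
    · exact ⟨t, Or.inl ht, hx⟩
    · exact ⟨t, Or.inr ht, hx⟩

lemma epreList_append {N : Net P T} (l₁ l₂ : List T) :
    epreList N (l₁ ++ l₂) = epreList N l₁ ∪ epreList N l₂ := by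
  ext x
  simp only [Set.mem_union, mem_epreList, List.mem_append]
  constructor
  · rintro ⟨t, ht | ht, hx⟩
    · exact Or.inl ⟨t, ht, hx⟩
    · exact Or.inr ⟨t, ht, hx⟩
  · rintro (⟨t, ht, hx⟩ | ⟨t, ht, hx⟩)
    · exact ⟨t, Or.inl ht, hx⟩
    · exact ⟨t, Or.inr ht, hx⟩

lemma valid_concat {N : Net P T} (σ : List T) (M : Set P) (t : T) :
    valid N M (σ ++ [t]) ↔ valid N M σ ∧ fireable N t (runFrom N M σ) := by
  induction σ generalizing M with
  | nil => simp [valid, runFrom]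
  | cons a σ ih =>
    show (fireable N a M ∧ valid N (fire N a M) (σ ++ [t])) ↔
      (fireable N a M ∧ valid N (fire N a M) σ) ∧ fireable N t (runFrom N (fire N a M) σ)
    rw [ih]
    tauto

lemma runFrom_concat {N : Net P T} (σ : List T) (M : Set P) (t : T) :
    runFrom N M (σ ++ [t]) = fire N t (runFrom N M σ) := by
  simp [runFrom, List.foldl_append]

/-! ### class membership helpers -/

lemma insQ_pre_empty {N : Net P T} {Q : Set P} {t : T} (h : t ∈ insQ N Q) :
    N.pre t ∩ Q = ∅ := by
  rcases h with ⟨-, h2⟩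
  simp only [postQ, Set.mem_setOf_eq] at h2
  exact Set.not_nonempty_iff_eq_empty.mp h2

lemma remQ_post_empty {N : Net P T} {Q : Set P} {t : T} (h : t ∈ remQ N Q) :
    N.post t ∩ Q = ∅ := by
  rcases h with ⟨-, h2⟩
  simp only [preQ, Set.mem_setOf_eq] at h2
  exact Set.not_nonempty_iff_eq_empty.mp h2

lemma readQ_eq {N : Net P T} {Q : Set P} {t : T} (h : t ∈ readQ N Q) :
    N.pre t ∩ Q = N.post t ∩ Q := h.2

/-- Transitions taking from `Q` also take from `Q'`, given interface preservation. -/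
lemma postQ_sub {N : Net P T} {Q Q' : Set P} (hQ' : Q' ⊆ Q)
    (hadjS : adjQ N Q ⊆ adjQ N Q')
    (hdec : adjQ N Q = insQ N Q ∪ remQ N Q ∪ readQ N Q) :
    postQ N Q ⊆ postQ N Q' := by
  intro u hu
  have huadj : u ∈ adjQ N Q := Or.inr hu
  have huadj' : u ∈ adjQ N Q' := hadjS huadj
  rw [hdec] at huadj
  rcases huadj with (hins | hrem) | hread
  · exact absurd hu hins.2
  · rcases huadj' with hpre' | hpost'
    · exfalso
      obtain ⟨x, hx1, hx2⟩ := hpre'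
      have h0 := remQ_post_empty hrem
      rw [Set.eq_empty_iff_forall_notMem] at h0
      exact h0 x ⟨hx1, hQ' hx2⟩
    · exact hpost'
  · rcases huadj' with hpre' | hpost'
    · obtain ⟨x, hx1, hx2⟩ := hpre'
      have hxQ : x ∈ N.post u ∩ Q := ⟨hx1, hQ' hx2⟩
      rw [← readQ_eq hread] at hxQ
      exact ⟨x, hxQ.1, hx2⟩
    · exact hpost'

/-! ### concatenation of in/out sequences -/

lemma isInSeq_single {N : Net P T} {Q : Set P} {t : T} (ht : t ∈ insQ N Q) :
    isInSeq N Q [t] := by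
  refine ⟨by simp, ?_, ?_, ?_⟩
  · intro u hu
    simp only [List.mem_singleton] at hu
    exact hu ▸ Or.inl ht
  · intro u hu
    simp only [List.head?_cons, Option.mem_some_iff] at hu
    exact hu ▸ ht
  · intro i h hi
    simp only [List.length_singleton] at h
    omega

lemma isOutSeq_single {N : Net P T} {Q : Set P} {t : T} (ht : t ∈ remQ N Q) :
    isOutSeq N Q [t] := by
  refine ⟨by simp, ?_, ?_, ?_⟩
  · intro u hu
    simp only [List.mem_singleton] at hu
    exact hu ▸ Or.inl ht
  · intro u hu
    simp only [List.head?_cons, Option.mem_some_iff] at hu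
    exact hu ▸ ht
  · intro i h hi
    simp only [List.length_singleton] at h
    omega

lemma isInSeq_concat {N : Net P T} {Q : Set P} {σ : List T} {t : T}
    (h : isInSeq N Q σ) (ht : t ∈ insQ N Q)
    (hd : Q ∩ (N.post t \ N.pre t) ∩ postList N σ = ∅) :
    isInSeq N Q (σ ++ [t]) := by
  obtain ⟨hne, hmem, hhead, hcond⟩ := h
  refine ⟨by simp, ?_, ?_, ?_⟩
  · intro u hu
    rcases List.mem_append.mp hu with hu | hu
    · exact hmem u hu
    · simp only [List.mem_singleton] at hu
      exact hu ▸ Or.inl ht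
  · obtain ⟨a, σ', rfl⟩ := List.exists_cons_of_ne_nil hne
    intro u hu
    simp only [List.cons_append, List.head?_cons, Option.mem_some_iff] at hu
    exact hu ▸ hhead a rfl
  · intro i hlt hpos
    rcases lt_or_ge i σ.length with hi | hi
    · have hget : (σ ++ [t]).get ⟨i, hlt⟩ = σ.get ⟨i, hi⟩ := by
        simp only [List.get_eq_getElem]
        exact List.getElem_append_left hi
      have htake : (σ ++ [t]).take i = σ.take i := by
        rw [List.take_append, Nat.sub_eq_zero_of_le (le_of_lt hi)]
        simp
      rw [hget, htake]
      exact hcond i hi hpos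
    · have hieq : i = σ.length := by
        have := hlt
        simp only [List.length_append, List.length_singleton] at this
        omega
      subst hieq
      have hget : (σ ++ [t]).get ⟨σ.length, hlt⟩ = t := by
        simp only [List.get_eq_getElem]
        rw [List.getElem_append_right (le_refl _)]
        simp
      have htake : (σ ++ [t]).take σ.length = σ := List.take_left
      rw [hget, htake]
      refine ⟨?_, hd⟩
      intro x hx
      exfalso
      have h0 := insQ_pre_empty ht
      rw [Set.eq_empty_iff_forall_notMem] at h0
      exact h0 x ⟨hx.2, hx.1⟩

lemma isOutSeq_concat {N : Net P T} {Q : Set P} {σ : List T} {t : T}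
    (h : isOutSeq N Q σ) (ht : t ∈ remQ N Q)
    (hd : Q ∩ N.pre t ⊆ Q \ epreList N σ) :
    isOutSeq N Q (σ ++ [t]) := by
  obtain ⟨hne, hmem, hhead, hcond⟩ := h
  refine ⟨by simp, ?_, ?_, ?_⟩
  · intro u hu
    rcases List.mem_append.mp hu with hu | hu
    · exact hmem u hu
    · simp only [List.mem_singleton] at hu
      exact hu ▸ Or.inl ht
  · obtain ⟨a, σ', rfl⟩ := List.exists_cons_of_ne_nil hne
    intro u hu
    simp only [List.cons_append, List.head?_cons, Option.mem_some_iff] at hu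
    exact hu ▸ hhead a rfl
  · intro i hlt hpos
    rcases lt_or_ge i σ.length with hi | hi
    · have hget : (σ ++ [t]).get ⟨i, hlt⟩ = σ.get ⟨i, hi⟩ := by
        simp only [List.get_eq_getElem]
        exact List.getElem_append_left hi
      have htake : (σ ++ [t]).take i = σ.take i := by
        rw [List.take_append, Nat.sub_eq_zero_of_le (le_of_lt hi)]
        simp
      rw [hget, htake]
      exact hcond i hi hpos
    · have hieq : i = σ.length := by
        have := hlt
        simp only [List.length_append, List.length_singleton] at this
        omega
      subst hieq
      have hget : (σ ++ [t]).get ⟨σ.length, hlt⟩ = t := by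
        simp only [List.get_eq_getElem]
        rw [List.getElem_append_right (le_refl _)]
        simp
      have htake : (σ ++ [t]).take σ.length = σ := List.take_left
      rw [hget, htake]
      exact hd

end Stmt18Aux

section Stmt18Main

variable {P T : Type}

/-- The per-distributed-place state invariant: the marking restricted to `Q` is either a
partial fill along an in-sequence, or a partial drain along an out-sequence. -/
def QSt (N : Net P T) (Q M : Set P) : Prop :=
  (∃ σ₀ : List T, (σ₀ = [] ∨ isInSeq N Q σ₀) ∧ M ∩ Q = Q ∩ postList N σ₀) ∨
  (∃ σ₁ : List T, (σ₁ = [] ∨ isOutSeq N Q σ₁) ∧ M ∩ Q = Q \ epreList N σ₁)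

lemma postList_cons {N : Net P T} (v : T) (l : List T) :
    postList N (v :: l) = N.post v ∪ postList N l := by
  ext x
  simp only [Set.mem_union, mem_postList, List.mem_cons]
  constructor
  · rintro ⟨u, rfl | hu, hx⟩
    · exact Or.inl hx
    · exact Or.inr ⟨u, hu, hx⟩
  · rintro (hx | ⟨u, hu, hx⟩)
    · exact ⟨v, Or.inl rfl, hx⟩
    · exact ⟨u, Or.inr hu, hx⟩

lemma exists_first_producer {N : Net P T} {τ : List T} {q : P} (h : q ∈ postList N τ) :
    ∃ j, ∃ hj : j < τ.length, q ∈ N.post (τ.get ⟨j, hj⟩) ∧ q ∉ postList N (τ.take j) := by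
  induction τ with
  | nil =>
    rw [mem_postList] at h
    obtain ⟨t, ht, -⟩ := h
    exact absurd ht List.not_mem_nil
  | cons v τ' ih =>
    by_cases hv : q ∈ N.post v
    · exact ⟨0, by simp, hv, by rw [List.take_zero, postList_nil]; exact not_false⟩
    · have hq' : q ∈ postList N τ' := by
        rw [postList_cons] at h
        rcases h with h | h
        · exact absurd h hv
        · exact h
      obtain ⟨j, hj, h1, h2⟩ := ih hq'
      refine ⟨j + 1, by simpa using Nat.succ_lt_succ hj, h1, ?_⟩
      rw [List.take_succ_cons, postList_cons]
      rintro (hx | hx)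
      · exact hv hx
      · exact h2 hx

lemma mem_take_of_mem_left {σ e : List T} {j : ℕ} (hj : σ.length ≤ j) :
    ∀ a ∈ σ, a ∈ (σ ++ e).take j := by
  intro a ha
  rw [List.take_append, List.take_of_length_le hj]
  exact List.mem_append.mpr (Or.inl ha)

/-- If a removing transition is `Q`-enabled after an in-sequence, the in-sequence has
already covered all of `Q`. -/
lemma in_complete {N : Net P T} {Q : Set P} (hdp : distPlace N Q) {σ : List T}
    (hσ : isInSeq N Q σ) {t : T} (htR : t ∈ remQ N Q)
    (hpre : Q ∩ N.pre t ⊆ postList N σ) : Q ⊆ postList N σ := by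
  obtain ⟨τ, hpfx, hτin, hτcov⟩ := hdp.2.2.2.1 σ hσ
  obtain ⟨e, rfl⟩ := hpfx
  have hσpos : 0 < σ.length := List.length_pos_iff.mpr hσ.1
  have claim : ∀ j, σ.length ≤ j → j ≤ (σ ++ e).length →
      Q ∩ postList N ((σ ++ e).take j) ⊆ postList N σ := by
    intro j hj
    induction j, hj using Nat.le_induction with
    | base =>
      intro _
      rw [List.take_left]
      exact Set.inter_subset_right
    | succ j hj ih =>
      intro hj1
      have hjlt : j < (σ ++ e).length := by omega
      have hjle : j ≤ (σ ++ e).length := le_of_lt hjlt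
      have htk : (σ ++ e).take (j + 1) = (σ ++ e).take j ++ [(σ ++ e).get ⟨j, hjlt⟩] := by
        rw [List.take_succ]
        congr 1
        rw [List.getElem?_eq_getElem hjlt]
        simp
      have humem : (σ ++ e).get ⟨j, hjlt⟩ ∈ σ ++ e := List.get_mem _ _
      have hcnd := hτin.2.2.2 j hjlt (lt_of_lt_of_le hσpos hj)
      rcases hτin.2.1 _ humem with huI | huD
      · exfalso
        obtain ⟨x, hx⟩ := hdp.2.2.1 _ huI t htR
        have hx2 : x ∈ postList N σ := hpre ⟨hx.1.1, hx.2⟩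
        have hx3 : x ∈ postList N ((σ ++ e).take j) :=
          postList_subset (mem_take_of_mem_left hj) hx2
        have hcnd2 := hcnd.2
        rw [Set.eq_empty_iff_forall_notMem] at hcnd2
        exact hcnd2 x ⟨⟨hx.1.1, hx.1.2⟩, hx3⟩
      · intro x hx
        rw [htk, postList_append] at hx
        rcases hx.2 with hx2 | hx2
        · exact ih hjle ⟨hx.1, hx2⟩
        · rw [postList_cons, postList_nil, Set.union_empty] at hx2
          have : x ∈ N.pre ((σ ++ e).get ⟨j, hjlt⟩) ∩ Q := by
            rw [readQ_eq huD]
            exact ⟨hx2, hx.1⟩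
          exact ih hjle ⟨hx.1, hcnd.1 ⟨hx.1, this.1⟩⟩
  intro q hq
  have h1 : q ∈ postList N (σ ++ e) := hτcov hq
  have h2 := claim (σ ++ e).length (by simp) le_rfl
  rw [List.take_length] at h2
  exact h2 ⟨hq, h1⟩

/-- If an inserting transition respects safety while `Q` is draining along an out-sequence,
the out-sequence must in fact have drained all of `Q`. -/
lemma out_drained {N : Net P T} {Q : Set P} (hdp : distPlace N Q) {σ : List T}
    (hσ : isOutSeq N Q σ) {t : T} (htI : t ∈ insQ N Q) {M : Set P}
    (hM : M ∩ Q = Q \ epreList N σ) (hsafet : (N.post t \ N.pre t) ∩ M = ∅) :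
    Q ⊆ epreList N σ := by
  obtain ⟨τ, hpfx, hτout, hτcov⟩ := hdp.2.2.2.2 σ hσ
  obtain ⟨e, rfl⟩ := hpfx
  have hσpos : 0 < σ.length := List.length_pos_iff.mpr hσ.1
  have claim : ∀ j, σ.length ≤ j → j ≤ (σ ++ e).length →
      Q ∩ epreList N ((σ ++ e).take j) ⊆ epreList N σ := by
    intro j hj
    induction j, hj using Nat.le_induction with
    | base =>
      intro _
      rw [List.take_left]
      exact Set.inter_subset_right
    | succ j hj ih =>
      intro hj1
      have hjlt : j < (σ ++ e).length := by omega
      have hjle : j ≤ (σ ++ e).length := le_of_lt hjlt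
      have htk : (σ ++ e).take (j + 1) = (σ ++ e).take j ++ [(σ ++ e).get ⟨j, hjlt⟩] := by
        rw [List.take_succ]
        congr 1
        rw [List.getElem?_eq_getElem hjlt]
        simp
      have humem : (σ ++ e).get ⟨j, hjlt⟩ ∈ σ ++ e := List.get_mem _ _
      have hcnd := hτout.2.2.2 j hjlt (lt_of_lt_of_le hσpos hj)
      rcases hτout.2.1 _ humem with huR | huD
      · exfalso
        obtain ⟨x, hx⟩ := hdp.2.2.1 t htI _ huR
        have hxQpre : x ∈ Q ∩ N.pre ((σ ++ e).get ⟨j, hjlt⟩) := ⟨hx.1.1, hx.2⟩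
        have hxnot : x ∉ epreList N ((σ ++ e).take j) := (hcnd hxQpre).2
        have hxnotσ : x ∉ epreList N σ := fun hc =>
          hxnot (epreList_subset (mem_take_of_mem_left hj) hc)
        have hxM : x ∈ M := by
          have : x ∈ Q \ epreList N σ := ⟨hx.1.1, hxnotσ⟩
          rw [← hM] at this
          exact this.1
        rw [Set.eq_empty_iff_forall_notMem] at hsafet
        exact hsafet x ⟨hx.1.2, hxM⟩
      · intro x hx
        rw [htk, epreList_append] at hx
        rcases hx.2 with hx2 | hx2
        · exact ih hjle ⟨hx.1, hx2⟩
        · exfalso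
          rw [mem_epreList] at hx2
          obtain ⟨u, hu, hx3⟩ := hx2
          simp only [List.mem_singleton] at hu
          subst hu
          have : x ∈ N.post ((σ ++ e).get ⟨j, hjlt⟩) ∩ Q := by
            rw [← readQ_eq huD]
            exact ⟨hx3.1, hx.1⟩
          exact hx3.2 this.1
  intro q hq
  have h1 : q ∈ epreList N (σ ++ e) := hτcov hq
  have h2 := claim (σ ++ e).length (by simp) le_rfl
  rw [List.take_length] at h2
  exact h2 ⟨hq, h1⟩

end Stmt18Main

section Stmt18Key

variable {P T : Type}

lemma epreList_single {N : Net P T} (t : T) :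
    epreList N [t] = N.pre t \ N.post t := by
  ext x
  rw [mem_epreList]
  simp

/-- Key lemma: fireability information transfers from `Q' = Q ∩ Pl` to `Q`. -/
lemma key_lemma {N : Net P T} {Q Q' : Set P} (hQ' : Q' ⊆ Q)
    (hadjS : adjQ N Q ⊆ adjQ N Q')
    (henS : enablesQ N Q ⊆ enablesQ N Q')
    (hdisS : disablesQ N Q ⊆ disablesQ N Q')
    (hdp : distPlace N Q) {M : Set P} (hst : QSt N Q M)
    {u : T} (h' : Q' ∩ N.pre u ⊆ M) : Q ∩ N.pre u ⊆ M := by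
  intro q hq
  by_contra hqM
  rcases hst with ⟨σ₀, hσ₀, hM⟩ | ⟨σ₁, hσ₁, hM⟩
  · rcases hσ₀ with rfl | hσ₀
    · rw [postList_nil, Set.inter_empty] at hM
      have hupost : u ∈ postQ N Q := ⟨q, hq.2, hq.1⟩
      have hupost' : u ∈ postQ N Q' := postQ_sub hQ' hadjS hdp.2.1 hupost
      obtain ⟨x, hx1, hx2⟩ := hupost'
      have hxM : x ∈ M := h' ⟨hx2, hx1⟩
      have hxc : x ∈ M ∩ Q := ⟨hxM, hQ' hx2⟩
      rw [hM] at hxc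
      exact hxc
    · have hqnotpl : q ∉ postList N σ₀ := by
        intro hc
        have h0 : q ∈ M ∩ Q := by rw [hM]; exact ⟨hq.1, hc⟩
        exact hqM h0.1
      obtain ⟨τ, hpfx, hτin, hτcov⟩ := hdp.2.2.2.1 σ₀ hσ₀
      obtain ⟨e, rfl⟩ := hpfx
      have hqτ : q ∈ postList N (σ₀ ++ e) := hτcov hq.1
      obtain ⟨j, hjlt, hjpost, hjnot⟩ := exists_first_producer hqτ
      have hjge : σ₀.length ≤ j := by
        by_contra hlt'
        push_neg at hlt'
        have hg : (σ₀ ++ e).get ⟨j, hjlt⟩ = σ₀.get ⟨j, hlt'⟩ := by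
          simp only [List.get_eq_getElem]
          exact List.getElem_append_left hlt'
        apply hqnotpl
        rw [mem_postList]
        exact ⟨σ₀.get ⟨j, hlt'⟩, List.get_mem _ _, hg ▸ hjpost⟩
      have hσpos : 0 < σ₀.length := List.length_pos_iff.mpr hσ₀.1
      have hjpos : 0 < j := lt_of_lt_of_le hσpos hjge
      have hcnd := hτin.2.2.2 j hjlt hjpos
      have ht₂mem : (σ₀ ++ e).get ⟨j, hjlt⟩ ∈ σ₀ ++ e := List.get_mem _ _
      have ht₂I : (σ₀ ++ e).get ⟨j, hjlt⟩ ∈ insQ N Q := by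
        rcases hτin.2.1 _ ht₂mem with h | h
        · exact h
        · exfalso
          have hqp : q ∈ N.pre ((σ₀ ++ e).get ⟨j, hjlt⟩) ∩ Q := by
            rw [readQ_eq h]
            exact ⟨hjpost, hq.1⟩
          exact hjnot (hcnd.1 ⟨hq.1, hqp.1⟩)
      have hqpre₂ : q ∉ N.pre ((σ₀ ++ e).get ⟨j, hjlt⟩) := by
        intro hc
        have h0 := insQ_pre_empty ht₂I
        rw [Set.eq_empty_iff_forall_notMem] at h0
        exact h0 q ⟨hc, hq.1⟩
      have hen : ((σ₀ ++ e).get ⟨j, hjlt⟩, u) ∈ enablesQ N Q :=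
        ⟨q, ⟨⟨hq.1, hjpost, hqpre₂⟩, hq.2⟩⟩
      obtain ⟨x, hx⟩ := henS hen
      have hxM : x ∈ M := h' ⟨hx.1.1, hx.2⟩
      have hxpl : x ∈ postList N σ₀ := by
        have hxc : x ∈ M ∩ Q := ⟨hxM, hQ' hx.1.1⟩
        rw [hM] at hxc
        exact hxc.2
      have hxtk : x ∈ postList N ((σ₀ ++ e).take j) :=
        postList_subset (mem_take_of_mem_left hjge) hxpl
      have hcnd2 := hcnd.2
      rw [Set.eq_empty_iff_forall_notMem] at hcnd2
      exact hcnd2 x ⟨⟨hQ' hx.1.1, hx.1.2⟩, hxtk⟩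
  · rcases hσ₁ with rfl | hσ₁
    · rw [epreList_nil, Set.diff_empty] at hM
      have h0 : q ∈ M ∩ Q := by rw [hM]; exact hq.1
      exact hqM h0.1
    · have hqe : q ∈ epreList N σ₁ := by
        by_contra hc
        have h0 : q ∈ M ∩ Q := by rw [hM]; exact ⟨hq.1, hc⟩
        exact hqM h0.1
      rw [mem_epreList] at hqe
      obtain ⟨t₃, ht₃mem, hq3⟩ := hqe
      have hdis : (t₃, u) ∈ disablesQ N Q := ⟨q, ⟨⟨hq.1, hq3⟩, hq.2⟩⟩
      obtain ⟨x, hx⟩ := hdisS hdis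
      have hxM : x ∈ M := h' ⟨hx.1.1, hx.2⟩
      have hxe : x ∈ epreList N σ₁ := by
        rw [mem_epreList]
        exact ⟨t₃, ht₃mem, hx.1.2⟩
      have hxc : x ∈ M ∩ Q := ⟨hxM, hQ' hx.1.1⟩
      rw [hM] at hxc
      exact hxc.2 hxe

lemma fire_inter {N : Net P T} {t : T} {M Q : Set P} :
    fire N t M ∩ Q = ((M ∩ Q) \ N.pre t) ∪ (N.post t ∩ Q) := by
  ext x
  simp only [fire, Set.mem_inter_iff, Set.mem_union, Set.mem_diff]
  tauto

/-- The state invariant is preserved by firing any transition (in the big net). -/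
lemma stepQ {N : Net P T} {Q : Set P} (hdp : distPlace N Q) {M : Set P}
    (hst : QSt N Q M) {t : T} (hfire : fireable N t M)
    (hsafet : (N.post t \ N.pre t) ∩ M = ∅) : QSt N Q (fire N t M) := by
  by_cases hI : t ∈ insQ N Q
  · have hpre0 : N.pre t ∩ Q = ∅ := insQ_pre_empty hI
    have hpre0' : ∀ x ∈ Q, x ∉ N.pre t := by
      intro x hxQ hc
      rw [Set.eq_empty_iff_forall_notMem] at hpre0
      exact hpre0 x ⟨hc, hxQ⟩
    have hfe : fire N t M ∩ Q = (M ∩ Q) ∪ (N.post t ∩ Q) := by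
      rw [fire_inter]
      congr 1
      ext x
      simp only [Set.mem_diff, Set.mem_inter_iff]
      exact ⟨fun h => h.1, fun h => ⟨h, hpre0' x h.2⟩⟩
    rcases hst with ⟨σ₀, hσ₀, hM⟩ | ⟨σ₁, hσ₁, hM⟩
    · refine Or.inl ⟨σ₀ ++ [t], Or.inr ?_, ?_⟩
      · rcases hσ₀ with rfl | hσ₀
        · exact isInSeq_single hI
        · refine isInSeq_concat hσ₀ hI ?_
          rw [Set.eq_empty_iff_forall_notMem]
          rintro x ⟨⟨hxQ, hxpp⟩, hxpl⟩
          have hxM : x ∈ M := by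
            have h0 : x ∈ M ∩ Q := by rw [hM]; exact ⟨hxQ, hxpl⟩
            exact h0.1
          rw [Set.eq_empty_iff_forall_notMem] at hsafet
          exact hsafet x ⟨hxpp, hxM⟩
      · rw [hfe, hM, postList_append, postList_cons, postList_nil, Set.union_empty]
        ext x
        simp only [Set.mem_inter_iff, Set.mem_union]
        tauto
    · rcases hσ₁ with rfl | hσ₁
      · exfalso
        rw [epreList_nil, Set.diff_empty] at hM
        obtain ⟨y, hy⟩ := hI.1
        have hyM : y ∈ M := by
          have h0 : y ∈ M ∩ Q := by rw [hM]; exact hy.2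
          exact h0.1
        rw [Set.eq_empty_iff_forall_notMem] at hsafet
        exact hsafet y ⟨⟨hy.1, hpre0' y hy.2⟩, hyM⟩
      · have hdr : Q ⊆ epreList N σ₁ := out_drained hdp hσ₁ hI hM hsafet
        have hMempty : M ∩ Q = ∅ := by
          rw [hM]
          exact Set.diff_eq_empty.mpr hdr
        refine Or.inl ⟨[t], Or.inr (isInSeq_single hI), ?_⟩
        rw [hfe, hMempty, Set.empty_union, postList_cons, postList_nil, Set.union_empty]
        exact Set.inter_comm _ _
  · by_cases hR : t ∈ remQ N Q
    · have hpost0 : N.post t ∩ Q = ∅ := remQ_post_empty hR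
      have hpost0' : ∀ x ∈ Q, x ∉ N.post t := by
        intro x hxQ hc
        rw [Set.eq_empty_iff_forall_notMem] at hpost0
        exact hpost0 x ⟨hc, hxQ⟩
      have hfe : fire N t M ∩ Q = (M ∩ Q) \ N.pre t := by
        rw [fire_inter, hpost0, Set.union_empty]
      rcases hst with ⟨σ₀, hσ₀, hM⟩ | ⟨σ₁, hσ₁, hM⟩
      · rcases hσ₀ with rfl | hσ₀
        · exfalso
          rw [postList_nil, Set.inter_empty] at hM
          obtain ⟨y, hy⟩ := hR.1
          have h0 : y ∈ M ∩ Q := ⟨hfire hy.1, hy.2⟩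
          rw [hM] at h0
          exact h0
        · have hpre : Q ∩ N.pre t ⊆ postList N σ₀ := by
            intro x hx
            have h0 : x ∈ M ∩ Q := ⟨hfire hx.2, hx.1⟩
            rw [hM] at h0
            exact h0.2
          have hcompl : Q ⊆ postList N σ₀ := in_complete hdp hσ₀ hR hpre
          have hMQ : M ∩ Q = Q := by
            rw [hM]
            exact Set.inter_eq_left.mpr hcompl
          refine Or.inr ⟨[t], Or.inr (isOutSeq_single hR), ?_⟩
          rw [hfe, hMQ, epreList_single]
          ext x
          simp only [Set.mem_diff]
          constructor
          · rintro ⟨hxQ, hxp⟩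
            exact ⟨hxQ, fun hc => hxp hc.1⟩
          · rintro ⟨hxQ, hxp⟩
            exact ⟨hxQ, fun hc => hxp ⟨hc, hpost0' x hxQ⟩⟩
      · refine Or.inr ⟨σ₁ ++ [t], Or.inr ?_, ?_⟩
        · rcases hσ₁ with rfl | hσ₁
          · exact isOutSeq_single hR
          · refine isOutSeq_concat hσ₁ hR ?_
            intro x hx
            have h0 : x ∈ M ∩ Q := ⟨hfire hx.2, hx.1⟩
            rw [hM] at h0
            exact h0
        · rw [hfe, hM, epreList_append, epreList_single]
          ext x
          simp only [Set.mem_diff, Set.mem_union]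
          constructor
          · rintro ⟨⟨hxQ, hxE⟩, hxp⟩
            exact ⟨hxQ, fun hc => hc.elim hxE (fun h => hxp h.1)⟩
          · rintro ⟨hxQ, hx⟩
            exact ⟨⟨hxQ, fun h => hx (Or.inl h)⟩,
              fun hp => hx (Or.inr ⟨hp, hpost0' x hxQ⟩)⟩
    · by_cases hDr : t ∈ readQ N Q
      · have heq : fire N t M ∩ Q = M ∩ Q := by
          rw [fire_inter]
          ext x
          constructor
          · rintro (⟨hx, -⟩ | hx)
            · exact hx
            · have h0 : x ∈ N.pre t ∩ Q := by
                rw [readQ_eq hDr]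
                exact hx
              exact ⟨hfire h0.1, hx.2⟩
          · intro hx
            by_cases hxpre : x ∈ N.pre t
            · right
              have h0 : x ∈ N.post t ∩ Q := by
                rw [← readQ_eq hDr]
                exact ⟨hxpre, hx.2⟩
              exact h0
            · exact Or.inl ⟨hx, hxpre⟩
        rcases hst with ⟨σ₀, h1, h2⟩ | ⟨σ₁, h1, h2⟩
        · exact Or.inl ⟨σ₀, h1, heq.trans h2⟩
        · exact Or.inr ⟨σ₁, h1, heq.trans h2⟩
      · have hnadj : t ∉ adjQ N Q := by
          intro hc
          rw [hdp.2.1] at hc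
          rcases hc with (h | h) | h
          exacts [hI h, hR h, hDr h]
        have hpre0 : ∀ x ∈ Q, x ∉ N.pre t := by
          intro x hxQ hc
          exact hnadj (Or.inr ⟨x, hc, hxQ⟩)
        have hpost0 : N.post t ∩ Q = ∅ := by
          rw [Set.eq_empty_iff_forall_notMem]
          rintro x ⟨hx1, hx2⟩
          exact hnadj (Or.inl ⟨x, hx1, hx2⟩)
        have heq : fire N t M ∩ Q = M ∩ Q := by
          rw [fire_inter, hpost0, Set.union_empty]
          ext x
          exact ⟨fun h => h.1, fun hx => ⟨hx, hpre0 x hx.2⟩⟩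
        rcases hst with ⟨σ₀, h1, h2⟩ | ⟨σ₁, h1, h2⟩
        · exact Or.inl ⟨σ₀, h1, heq.trans h2⟩
        · exact Or.inr ⟨σ₁, h1, heq.trans h2⟩

end Stmt18Key

section Stmt18Final

variable {P T : Type}

lemma fire_restrict {N : Net P T} (Pl : Set P) (t : T) (M : Set P) :
    fire (restrictNet N Pl) t (M ∩ Pl) = fire N t M ∩ Pl := by
  ext x
  simp only [fire, restrictNet, Set.mem_union, Set.mem_diff, Set.mem_inter_iff]
  tauto

end Stmt18Final

theorem stmt18' (N : Net P T) (DP : P → Set P) (Pl : Set P)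
    (hsafe : safe N)
    (hmem : ∀ p, p ∈ DP p)
    (hdp : ∀ p, distPlace N (DP p))
    (hinit : ∀ p, DP p ∩ N.minit = ∅ ∨ DP p ⊆ N.minit)
    (hadj : ∀ p, adjQ N (DP p ∩ Pl) = adjQ N (DP p))
    (hen : ∀ p, enablesQ N (DP p ∩ Pl) = enablesQ N (DP p))
    (hdis : ∀ p, disablesQ N (DP p ∩ Pl) = disablesQ N (DP p)) :
    safe (restrictNet N Pl) := by
  classical
  set N' := restrictNet N Pl with hN'
  -- generic fireability transfer
  have transfer : ∀ (M : Set P), (∀ p, QSt N (DP p) M) → ∀ t : T,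
      N.pre t ∩ Pl ⊆ M → N.pre t ⊆ M := by
    intro M hQS t h' q hq
    have hsub : DP q ∩ Pl ⊆ DP q := Set.inter_subset_left
    have hkey := key_lemma hsub ((hadj q).symm.subset) ((hen q).symm.subset)
      ((hdis q).symm.subset) (hdp q) (hQS q)
      (u := t) (M := M) ?_
    · exact hkey ⟨hmem q, hq⟩
    · rintro x ⟨⟨hxQ, hxPl⟩, hxpre⟩
      exact h' ⟨hxpre, hxPl⟩
  -- main simulation induction
  have H : ∀ σ : List T, valid N' N'.minit σ →
      valid N N.minit σ ∧
      runFrom N' N'.minit σ = runFrom N N.minit σ ∩ Pl ∧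
      (∀ p, QSt N (DP p) (runFrom N N.minit σ)) := by
    intro σ
    induction σ using List.reverseRecOn with
    | nil =>
      intro _
      refine ⟨trivial, rfl, ?_⟩
      intro p
      rcases hinit p with h | h
      · refine Or.inl ⟨[], Or.inl rfl, ?_⟩
        rw [postList_nil, Set.inter_empty]
        rw [Set.inter_comm]
        exact h
      · refine Or.inr ⟨[], Or.inl rfl, ?_⟩
        rw [epreList_nil, Set.diff_empty]
        exact Set.inter_eq_right.mpr h
    | append_singleton σ t ih =>
      intro hv'
      rw [valid_concat] at hv'
      obtain ⟨hv'σ, hft⟩ := hv'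
      obtain ⟨hvN, hrun, hQS⟩ := ih hv'σ
      have hft' : N.pre t ∩ Pl ⊆ runFrom N N.minit σ := by
        intro x hx
        have hx2 : x ∈ runFrom N' N'.minit σ := hft hx
        rw [hrun] at hx2
        exact hx2.1
      have hfireN : fireable N t (runFrom N N.minit σ) :=
        transfer _ hQS t hft'
      have hsafeT := hsafe _ ⟨σ, hvN, rfl⟩ t hfireN
      refine ⟨(valid_concat _ _ _).mpr ⟨hvN, hfireN⟩, ?_, ?_⟩
      · rw [runFrom_concat, runFrom_concat, hrun]
        exact fire_restrict Pl t _
      · intro p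
        rw [runFrom_concat]
        exact stepQ (hdp p) (hQS p) hfireN hsafeT
  -- conclude safety of the restricted net
  intro M' hreach t hfire'
  obtain ⟨σ, hσ, rfl⟩ := hreach
  obtain ⟨hvN, hrun, hQS⟩ := H σ hσ
  have hft' : N.pre t ∩ Pl ⊆ runFrom N N.minit σ := by
    intro x hx
    have hx2 : x ∈ runFrom N' N'.minit σ := hfire' hx
    rw [hrun] at hx2
    exact hx2.1
  have hfireN : fireable N t (runFrom N N.minit σ) := transfer _ hQS t hft'
  have hsafeT := hsafe _ ⟨σ, hvN, rfl⟩ t hfireN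
  rw [hrun, Set.eq_empty_iff_forall_notMem]
  rintro x ⟨⟨hxpost, hxnpre⟩, hxM, hxPl⟩
  have hxpre : x ∉ N.pre t := fun hc => hxnpre ⟨hc, hxPl⟩
  rw [Set.eq_empty_iff_forall_notMem] at hsafeT
  exact hsafeT x ⟨⟨hxpost.1, hxpre⟩, hxM⟩

/-- under the distributed-place reduction hypotheses, the reduced net
is safe. -/
theorem stmt18 (N : Net P T) (DP : P → Set P) (Pl : Set P)
    (hsafe : safe N)
    (hNwf : ∀ t, (N.pre t).Nonempty)
    (hmem : ∀ p, p ∈ DP p)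
    (hdp : ∀ p, distPlace N (DP p))
    (hinit : ∀ p, DP p ∩ N.minit = ∅ ∨ DP p ⊆ N.minit)
    (hNwfT : ∀ t, ((restrictNet N Pl).pre t).Nonempty)
    (hNwfP : ∀ p ∈ Pl, (adjQ N {p}).Nonempty)
    (hadj : ∀ p, adjQ N (DP p ∩ Pl) = adjQ N (DP p))
    (hen : ∀ p, enablesQ N (DP p ∩ Pl) = enablesQ N (DP p))
    (hdis : ∀ p, disablesQ N (DP p ∩ Pl) = disablesQ N (DP p)) :
    safe (restrictNet N Pl) := by
  exact stmt18' N DP Pl hsafe hmem hdp hinit hadj hen hdis
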